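/- Composition formula for associated Stirling–Carlitz numbers of the second kind: for every integer N ≥ 0, every k ≥ 1 and every m ≥ 0, (Π(k)/Π(m)) · {m brace k}_{C,≥N} = Σ_{i_1,…,i_k ≥ 0, r^{N+i_1}+⋯+r^{N+i_k} = m} 1/(D_{N+i_1} ⋯ D_{N+i_k}), where the sum is over all ordered k-tuples of nonnegative integers (i_1,…,i_k) with r^{N+i_1}+⋯+r^{N+i_k} = m (and is empty, giving 0, if no such tuple exists). -/

import Mathlib

/-!
Carlitz module: `Fq` is a finite field with `r = Fintype.card Fq` elements (so `r` is a
power of a prime `p`), and `K = Fq(T)` is the field of rational functions over `Fq`.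
-/

noncomputable section

variable (Fq : Type*) [Field Fq] [Fintype Fq]

/-- `r`, the number of elements of the finite field `Fq` (a prime power). -/
def rq : ℕ := Fintype.card Fq

/-- `[i] = T^{r^i} − T` in `K = Fq(T)`. -/
def carlitzBracket (i : ℕ) : RatFunc Fq := RatFunc.X ^ rq Fq ^ i - RatFunc.X

/-- `D_0 = 1`, `D_i = [i]·D_{i−1}^r`. -/
def carlitzD : ℕ → RatFunc Fq
  | 0 => 1
  | i + 1 => carlitzBracket Fq (i + 1) * carlitzD i ^ rq Fq

/-- `L_0 = 1`, `L_i = [i]·L_{i−1}`. -/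
def carlitzL : ℕ → RatFunc Fq
  | 0 => 1
  | i + 1 => carlitzBracket Fq (i + 1) * carlitzL i

/-- The Carlitz factorial `Π(i) = ∏_j D_j^{c_j}`, where `i = Σ_j c_j r^j` with
`0 ≤ c_j < r` is the base-`r` expansion of `i`. -/
def carlitzPi (i : ℕ) : RatFunc Fq :=
  ∏ j ∈ Finset.range (i + 1), carlitzD Fq j ^ (Nat.digits (rq Fq) i).getD j 0

/-- The power series `Σ_{j=0}^∞ (D_N/D_{N+j}) x^{r^{N+j} − r^N}`, i.e.
`(e_C(x) − Σ_{i=0}^{N−1} x^{r^i}/D_i)·D_N/x^{r^N}`; it has constant term `1`. -/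
def bcSeries (N : ℕ) : PowerSeries (RatFunc Fq) :=
  PowerSeries.mk fun m => ∑ j ∈ Finset.range (m + 1),
    if m = rq Fq ^ (N + j) - rq Fq ^ N then carlitzD Fq N / carlitzD Fq (N + j) else 0

/-- The truncated Bernoulli–Carlitz number `BC_{N,n}`: `BC_{N,n}/Π(n)` is the `n`-th
coefficient of the multiplicative inverse of the power series
`Σ_{j=0}^∞ (D_N/D_{N+j}) x^{r^{N+j} − r^N}`. -/
def truncBC (N n : ℕ) : RatFunc Fq :=
  carlitzPi Fq n * PowerSeries.coeff (R := RatFunc Fq) n (bcSeries Fq N)⁻¹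

/-- The power series `Σ_{j=0}^∞ (−1)^j (L_N/L_{N+j}) x^{r^{N+j} − r^N}`, i.e.
`(log_C(x) − Σ_{i=0}^{N−1} (−1)^i x^{r^i}/L_i)·(−1)^N L_N/x^{r^N}`;
it has constant term `1`. -/
def ccSeries (N : ℕ) : PowerSeries (RatFunc Fq) :=
  PowerSeries.mk fun m => ∑ j ∈ Finset.range (m + 1),
    if m = rq Fq ^ (N + j) - rq Fq ^ N then
      (-1) ^ j * carlitzL Fq N / carlitzL Fq (N + j) else 0

/-- The truncated Cauchy–Carlitz number `CC_{N,n}`: `CC_{N,n}/Π(n)` is the `n`-th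
coefficient of the multiplicative inverse of the power series
`Σ_{j=0}^∞ (−1)^j (L_N/L_{N+j}) x^{r^{N+j} − r^N}`. -/
def truncCC (N n : ℕ) : RatFunc Fq :=
  carlitzPi Fq n * PowerSeries.coeff (R := RatFunc Fq) n (ccSeries Fq N)⁻¹

/-- The tail `e_C(z) − 𝓔_{N−1}(z) = Σ_{i=N}^∞ z^{r^i}/D_i` of the Carlitz exponential. -/
def carlitzExpTail (N : ℕ) : PowerSeries (RatFunc Fq) :=
  PowerSeries.mk fun m => ∑ j ∈ Finset.range (m + 1),
    if m = rq Fq ^ (N + j) then (carlitzD Fq (N + j))⁻¹ else 0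

/-- The associated Stirling–Carlitz number of the second kind `{n brace k}_{C,≥N}`,
defined by `(e_C(z) − 𝓔_{N−1}(z))^k/Π(k) = Σ_n {n brace k}_{C,≥N} z^n/Π(n)`. -/
def stirling2C (N k n : ℕ) : RatFunc Fq :=
  carlitzPi Fq n / carlitzPi Fq k * PowerSeries.coeff (R := RatFunc Fq) n (carlitzExpTail Fq N ^ k)

/-- The tail `log_C(z) − 𝓕_{N−1}(z) = Σ_{i=N}^∞ (−1)^i z^{r^i}/L_i` of the Carlitz
logarithm. -/
def carlitzLogTail (N : ℕ) : PowerSeries (RatFunc Fq) :=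
  PowerSeries.mk fun m => ∑ j ∈ Finset.range (m + 1),
    if m = rq Fq ^ (N + j) then (-1) ^ (N + j) * (carlitzL Fq (N + j))⁻¹ else 0

/-- The associated Stirling–Carlitz number of the first kind `{n brack k}_{C,≥N}`,
defined by `(log_C(z) − 𝓕_{N−1}(z))^k/Π(k) = Σ_n {n brack k}_{C,≥N} z^n/Π(n)`. -/
def stirling1C (N k n : ℕ) : RatFunc Fq :=
  carlitzPi Fq n / carlitzPi Fq k * PowerSeries.coeff (R := RatFunc Fq) n (carlitzLogTail Fq N ^ k)

/-!
The nonzero coefficients of `e_C(z) − 𝓔_{N−1}(z)` are `1/D_{N+i}` at `z^{r^{N+i}}`, so the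
coefficient of `z^m` in its `k`-th power is a sum over ordered `k`-tuples of such exponents adding
up to `m`; since `i ↦ r^{N+i}` is injective, these tuples are exactly the tuples `(i_1, …, i_k)`.
-/

namespace PowerSeries

variable {R : Type*} [CommSemiring R]

theorem coeff_pow_eq_finsum (f : R⟦X⟧) (k m : ℕ) :
    coeff m (f ^ k) = ∑ᶠ (l : Fin k → ℕ) (_ : ∑ j, l j = m), ∏ j, coeff (l j) f := by
  classical
  rw [← Fin.prod_const, coeff_prod, ← finsum_mem_coe_finset]
  refine finsum_mem_eq_of_bijOn (⇑) ⟨fun l hl => ?_, DFunLike.coe_injective.injOn, fun l hl => ?_⟩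
    fun _ _ => rfl
  · exact (Finset.mem_finsuppAntidiag.mp hl).1
  · exact ⟨Finsupp.equivFunOnFinite.symm l, Finset.mem_finsuppAntidiag.mpr ⟨hl, by simp⟩, rfl⟩

theorem coeff_pow_eq_finsum_of_coeff_eq_zero_of_notMem_range {ι : Type*} {f : R⟦X⟧}
    {g : ι → ℕ} (hg : Function.Injective g) (hf : ∀ n ∉ Set.range g, coeff n f = 0) (k m : ℕ) :
    coeff m (f ^ k) = ∑ᶠ (i : Fin k → ι) (_ : ∑ j, g (i j) = m), ∏ j, coeff (g (i j)) f := by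
  rw [coeff_pow_eq_finsum]
  symm
  calc _ = ∑ᶠ l ∈ (g ∘ ·) '' {i : Fin k → ι | ∑ j, g (i j) = m}, ∏ j, coeff (l j) f :=
        (finsum_mem_image hg.comp_left.injOn).symm
    _ = ∑ᶠ l ∈ {l : Fin k → ℕ | ∑ j, l j = m}, ∏ j, coeff (l j) f := by
      refine finsum_mem_inter_support_eq' _ _ _ fun l hl => ⟨?_, fun hl_sum => ?_⟩
      · rintro ⟨i, hi, rfl⟩
        exact hi
      · have hl_range : ∀ j, l j ∈ Set.range g := fun j => by
          by_contra h
          exact hl (Finset.prod_eq_zero (Finset.mem_univ j) (hf _ h))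
        choose i hi using hl_range
        exact ⟨i, by simpa [hi] using hl_sum, funext hi⟩

end PowerSeries

theorem one_lt_rq : 1 < rq Fq := Fintype.one_lt_card

theorem carlitzBracket_ne_zero {i : ℕ} (hi : i ≠ 0) : carlitzBracket Fq i ≠ 0 := by
  rw [carlitzBracket, ← RatFunc.algebraMap_X, ← map_pow, ← map_sub]
  exact RatFunc.algebraMap_ne_zero (FiniteField.X_pow_card_pow_sub_X_ne_zero Fq hi (one_lt_rq Fq))

theorem carlitzD_ne_zero : ∀ i, carlitzD Fq i ≠ 0
  | 0 => one_ne_zero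
  | i + 1 =>
    mul_ne_zero (carlitzBracket_ne_zero Fq i.succ_ne_zero) (pow_ne_zero _ (carlitzD_ne_zero i))

theorem carlitzPi_ne_zero (n : ℕ) : carlitzPi Fq n ≠ 0 :=
  Finset.prod_ne_zero_iff.mpr fun j _ => pow_ne_zero _ (carlitzD_ne_zero Fq j)

theorem rq_pow_add_injective (N : ℕ) : Function.Injective fun j => rq Fq ^ (N + j) :=
  fun _ _ h => Nat.add_left_cancel (Nat.pow_right_injective (one_lt_rq Fq) h)

theorem coeff_carlitzExpTail_rq_pow (N j : ℕ) :
    PowerSeries.coeff (rq Fq ^ (N + j)) (carlitzExpTail Fq N) = (carlitzD Fq (N + j))⁻¹ := by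
  rw [carlitzExpTail, PowerSeries.coeff_mk, Finset.sum_eq_single_of_mem j, if_pos rfl]
  · exact Finset.mem_range_succ_iff.mpr ((Nat.lt_pow_self (one_lt_rq Fq)).le.trans' (by omega))
  · exact fun b _ hb => if_neg fun h => hb (rq_pow_add_injective Fq N h).symm

theorem coeff_carlitzExpTail_of_notMem_range (N : ℕ) {n : ℕ}
    (hn : n ∉ Set.range fun j => rq Fq ^ (N + j)) :
    PowerSeries.coeff n (carlitzExpTail Fq N) = 0 := by
  rw [carlitzExpTail, PowerSeries.coeff_mk]
  exact Finset.sum_eq_zero fun j _ => if_neg fun h => hn ⟨j, h.symm⟩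

theorem stirling2C_composition (N k m : ℕ) :
    carlitzPi Fq k / carlitzPi Fq m * stirling2C Fq N k m =
      ∑ᶠ (i : Fin k → ℕ) (_ : ∑ j, rq Fq ^ (N + i j) = m),
        ∏ j, (carlitzD Fq (N + i j))⁻¹ := by
  have hcoeff : carlitzPi Fq k / carlitzPi Fq m * stirling2C Fq N k m =
      PowerSeries.coeff m (carlitzExpTail Fq N ^ k) := by
    have := carlitzPi_ne_zero Fq k
    have := carlitzPi_ne_zero Fq m
    rw [stirling2C]
    field_simp
  rw [hcoeff, PowerSeries.coeff_pow_eq_finsum_of_coeff_eq_zero_of_notMem_range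
    (rq_pow_add_injective Fq N) fun n hn => coeff_carlitzExpTail_of_notMem_range Fq N hn]
  simp_rw [coeff_carlitzExpTail_rq_pow]

end
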